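/- For every r > r₊ one has W₋(r) < W₊(r), and: (i) if E ≤ W₋(r) then r²E − a_H L̂_z ≤ −√(Δ(r)(m²r² + L²)) < 0; (ii) if E ≥ W₊(r) then r²E − a_H L̂_z ≥ √(Δ(r)(m²r² + L²)) > 0. Consequently, if R(r) ≥ 0 and (r² + a_H²)E − a_H L_z > 0 (the condition that the momentum is future-directed, since (r² + a_H²)E − a_H L_z = r²E − a_H L̂_z), then E ≥ W₊(r). -/
import Mathlib


open Real

noncomputable section

/-- `Δ(r) = r² − 2 M_H r + a_H²`. -/
def Δfun (MH aH : ℝ) (r : ℝ) : ℝ := r ^ 2 - 2 * MH * r + aH ^ 2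

/-- The effective potential `W₊(r) = a_H L̂_z/r² + √(Δ(r)(m²r² + L²))/r²`. -/
def Wplus (MH aH m E Lz L : ℝ) (r : ℝ) : ℝ :=
  aH * (Lz - aH * E) / r ^ 2 + Real.sqrt (Δfun MH aH r * (m ^ 2 * r ^ 2 + L ^ 2)) / r ^ 2

/-- The effective potential `W₋(r) = a_H L̂_z/r² − √(Δ(r)(m²r² + L²))/r²`. -/
def Wminus (MH aH m E Lz L : ℝ) (r : ℝ) : ℝ :=
  aH * (Lz - aH * E) / r ^ 2 - Real.sqrt (Δfun MH aH r * (m ^ 2 * r ^ 2 + L ^ 2)) / r ^ 2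

/-- The radial polynomial `R(r) = [E(r²+a_H²) − a_H L_z]² − Δ(r)(L² + m²r²)`. -/
def Rpol (MH aH m E Lz L : ℝ) (r : ℝ) : ℝ :=
  (E * (r ^ 2 + aH ^ 2) - aH * Lz) ^ 2
    - (r ^ 2 - 2 * MH * r + aH ^ 2) * (L ^ 2 + m ^ 2 * r ^ 2)

/-- For every `r > r₊`: `W₋(r) < W₊(r)`; (i) if `E ≤ W₋(r)` then
`r²E − a_H L̂_z ≤ −√(Δ(r)(m²r²+L²)) < 0`; (ii) if `E ≥ W₊(r)` then
`r²E − a_H L̂_z ≥ √(Δ(r)(m²r²+L²)) > 0`.  Consequently, if `R(r) ≥ 0` and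
`(r²+a_H²)E − a_H L_z > 0` (future-directedness), then `E ≥ W₊(r)`. -/
theorem Wplus_Wminus_future_directed (MH aH m E Lz L : ℝ)
    (hMH : 0 < MH) (ha : aH ^ 2 < MH ^ 2) (hm : 0 < m) (hL : 0 ≤ L) :
    ∀ r : ℝ, MH + Real.sqrt (MH ^ 2 - aH ^ 2) < r →
      (Wminus MH aH m E Lz L r < Wplus MH aH m E Lz L r) ∧
      (E ≤ Wminus MH aH m E Lz L r →
        r ^ 2 * E - aH * (Lz - aH * E) ≤
            -Real.sqrt (Δfun MH aH r * (m ^ 2 * r ^ 2 + L ^ 2)) ∧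
          -Real.sqrt (Δfun MH aH r * (m ^ 2 * r ^ 2 + L ^ 2)) < 0) ∧
      (Wplus MH aH m E Lz L r ≤ E →
        Real.sqrt (Δfun MH aH r * (m ^ 2 * r ^ 2 + L ^ 2)) ≤
            r ^ 2 * E - aH * (Lz - aH * E) ∧
          0 < Real.sqrt (Δfun MH aH r * (m ^ 2 * r ^ 2 + L ^ 2))) ∧
      (0 ≤ Rpol MH aH m E Lz L r → 0 < (r ^ 2 + aH ^ 2) * E - aH * Lz →
        Wplus MH aH m E Lz L r ≤ E) := by
  intro r hr
  have hs0 : 0 ≤ Real.sqrt (MH ^ 2 - aH ^ 2) := Real.sqrt_nonneg _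
  have hs2 : Real.sqrt (MH ^ 2 - aH ^ 2) ^ 2 = MH ^ 2 - aH ^ 2 :=
    Real.sq_sqrt (by linarith)
  have hr0 : 0 < r := by nlinarith
  have hr2 : (0:ℝ) < r ^ 2 := by positivity
  have hΔ : 0 < Δfun MH aH r := by
    unfold Δfun
    nlinarith [sq_nonneg (r - MH - Real.sqrt (MH ^ 2 - aH ^ 2))]
  have hP : 0 < m ^ 2 * r ^ 2 + L ^ 2 := by positivity
  set S := Real.sqrt (Δfun MH aH r * (m ^ 2 * r ^ 2 + L ^ 2)) with hSdef
  have hS : 0 < S := Real.sqrt_pos.mpr (by positivity)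
  have hS2 : S ^ 2 = Δfun MH aH r * (m ^ 2 * r ^ 2 + L ^ 2) :=
    Real.sq_sqrt (by positivity)
  have hWp : Wplus MH aH m E Lz L r = (aH * (Lz - aH * E) + S) / r ^ 2 := by
    rw [Wplus]; ring
  have hWm : Wminus MH aH m E Lz L r = (aH * (Lz - aH * E) - S) / r ^ 2 := by
    rw [Wminus]; ring
  refine ⟨?_, ?_, ?_, ?_⟩
  · rw [hWp, hWm, div_lt_div_iff₀ hr2 hr2]; nlinarith
  · intro h
    rw [hWm] at h
    have h2 : E * r ^ 2 ≤ aH * (Lz - aH * E) - S := (le_div_iff₀ hr2).mp h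
    constructor <;> linarith
  · intro h
    rw [hWp] at h
    have h2 : aH * (Lz - aH * E) + S ≤ E * r ^ 2 := (div_le_iff₀ hr2).mp h
    constructor <;> linarith
  · intro hR hF
    have hX : 0 < r ^ 2 * E - aH * (Lz - aH * E) := by nlinarith
    have hR2 : S ^ 2 ≤ (r ^ 2 * E - aH * (Lz - aH * E)) ^ 2 := by
      rw [hS2]; unfold Rpol at hR; unfold Δfun; nlinarith
    have hXS : S ≤ r ^ 2 * E - aH * (Lz - aH * E) := by nlinarith
    rw [hWp, div_le_iff₀ hr2]
    linarith


end
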